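/- Let φ be a substitution of constant length k ≥ 2 and let z ∈ A^ℤ satisfy z = T^c(φ(z)) for some 0 ≤ c < k. Then the k-kernel of z is contained in the finite set {Ψ(z) : Ψ ∈ F} ∪ {Ψ(T(z)) : Ψ ∈ F}, where F is the (finite) union of all families F_{φ,m}; consequently z is k-automatic. -/

import Mathlib

/-- The extension of a substitution `φ : A → A*` to finite words, by concatenation. -/
def substWord {A : Type*} (φ : A → List A) (w : List A) : List A := w.flatMap φ

/-- The extension of a substitution of constant length `k` to biinfinite sequences:
position `0` of the image is the start of `φ(x 0)`. -/
def substZ {A : Type*} [Inhabited A] (φ : A → List A) (k : ℕ) (x : ℤ → A) : ℤ → A :=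
  fun n => (φ (x (Int.fdiv n (k : ℤ)))).getD (Int.fmod n (k : ℤ)).toNat default

/-- The shift `T^c` on biinfinite sequences (`T` is the left shift). -/
def shiftZ {A : Type*} (c : ℤ) (x : ℤ → A) : ℤ → A := fun n => x (n + c)

/-- The composition `Ψ_{i_{m-1}} ∘ ⋯ ∘ Ψ_{i_0}` of the column maps of a substitution of
constant length `k`, where `Ψ_i` sends a letter `a` to the `i`-th letter of `φ(a)`. -/
def psiWord {A : Type*} [Inhabited A] (φ : A → List A) {m k : ℕ} (i : Fin m → Fin k) : A → A :=
  fun a => (List.ofFn i).foldl (fun b j => (φ b).getD (j : ℕ) default) a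

/-- The `k`-kernel of a biinfinite sequence `x`: the set of subsequences
`n ↦ x (k^m * n + j)` for `m ≥ 0` and `0 ≤ j < k^m`. -/
def kernelK {A : Type*} (k : ℕ) (x : ℤ → A) : Set (ℤ → A) :=
  {y | ∃ (m j : ℕ), j < k ^ m ∧ y = fun n => x ((k : ℤ) ^ m * n + (j : ℤ))}

/-! Unwinding `z = T^c(φ(z))` once gives `z (k N + j) = Ψ_r (z (N + q))` with `j + c = k q + r`,
`r < k`. Since `c < k`, a position `k^m n + j` with `j ≤ k^m` is thereby pulled back to
`k^(m-1) n + q` with again `q ≤ k^(m-1)`, so after `m` steps every kernel element is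
`Ψ ∘ z` or `Ψ ∘ T z` for a composite `Ψ` of column maps. These are maps `A → A`, of which
there are finitely many. -/

lemma psiWord_elim0 {A : Type*} [Inhabited A] (φ : A → List A) {k : ℕ}
    (i : Fin 0 → Fin k) (a : A) : psiWord φ i a = a := by
  simp [psiWord]

lemma psiWord_snoc {A : Type*} [Inhabited A] (φ : A → List A) {m k : ℕ}
    (i : Fin m → Fin k) (r : Fin k) (a : A) :
    psiWord φ (Fin.snoc i r) a = (φ (psiWord φ i a)).getD r default := by
  rw [psiWord, psiWord, List.ofFn_succ']
  simp

lemma substZ_mul_add {A : Type*} [Inhabited A] (φ : A → List A) {k : ℕ} (x : ℤ → A)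
    (M : ℤ) {r : ℕ} (hr : r < k) :
    substZ φ k x (k * M + r) = (φ (x M)).getD r default := by
  have hk : (0 : ℤ) < k := by omega
  have hdiv : Int.fdiv (k * M + r) k = M := by
    rw [Int.fdiv_eq_ediv_of_nonneg _ hk.le, Int.add_comm, Int.add_mul_ediv_left _ _ hk.ne',
      Int.ediv_eq_zero_of_lt (by positivity) (by exact_mod_cast hr), zero_add]
  have hmod : Int.fmod (k * M + r) k = r := by
    rw [Int.fmod_eq_emod_of_nonneg _ hk.le, Int.add_comm, Int.add_mul_emod_self_left,
      Int.emod_eq_of_lt (by positivity) (by exact_mod_cast hr)]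
  simp [substZ, hdiv, hmod]

section QuasiFixed

variable {A : Type*} [Inhabited A] {φ : A → List A} {k c : ℕ} {z : ℤ → A}

lemma apply_eq_getD_of_eq_shiftZ_substZ (hz : z = shiftZ (c : ℤ) (substZ φ k z))
    {N M : ℤ} {r : ℕ} (hr : r < k) (hNM : N + c = k * M + r) :
    z N = (φ (z M)).getD r default := by
  conv_lhs => rw [hz, shiftZ, hNM, substZ_mul_add φ z M hr]

lemma exists_psiWord_of_le_pow (hc : c < k) (hz : z = shiftZ (c : ℤ) (substZ φ k z)) :
    ∀ (m j : ℕ), j ≤ k ^ m → ∃ (i : Fin m → Fin k) (e : ℕ), e ≤ 1 ∧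
      ∀ n : ℤ, z ((k : ℤ) ^ m * n + j) = psiWord φ i (z (n + e)) := by
  intro m
  induction m with
  | zero =>
    intro j hj
    refine ⟨Fin.elim0, j, by simpa using hj, fun n => ?_⟩
    rw [psiWord_elim0, pow_zero, one_mul]
  | succ m ih =>
    intro j hj
    have hk : 0 < k := by omega
    have hq : (j + c) / k ≤ k ^ m := by
      rw [← Nat.lt_succ_iff, Nat.div_lt_iff_lt_mul hk]
      rw [pow_succ] at hj
      nlinarith
    obtain ⟨i, e, he, hi⟩ := ih ((j + c) / k) hq
    refine ⟨Fin.snoc i ⟨(j + c) % k, Nat.mod_lt _ hk⟩, e, he, fun n => ?_⟩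
    rw [psiWord_snoc, ← hi n]
    apply apply_eq_getD_of_eq_shiftZ_substZ hz (Nat.mod_lt _ hk)
    have hdm : ((k * ((j + c) / k) + (j + c) % k : ℕ) : ℤ) = j + c := by
      rw [Nat.div_add_mod]; push_cast; ring
    push_cast at hdm ⊢
    linear_combination -hdm

end QuasiFixed

lemma finite_setOf_psiWord_comp {A : Type*} [Inhabited A] [Finite A] (φ : A → List A) (k : ℕ)
    (x : ℤ → A) :
    {y : ℤ → A | ∃ (m : ℕ) (i : Fin m → Fin k), y = fun n => psiWord φ i (x n)}.Finite :=
  (Set.finite_range fun f : A → A => f ∘ x).subset <| by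
    rintro _ ⟨m, i, rfl⟩
    exact ⟨psiWord φ i, rfl⟩

theorem kernel_of_quasiFixed_period_one_general {A : Type*} [Inhabited A] [Fintype A]
    (φ : A → List A) (k : ℕ)
    (z : ℤ → A) (c : ℕ) (hc : c < k) (hz : z = shiftZ (c : ℤ) (substZ φ k z)) :
    kernelK k z ⊆
      ({y : ℤ → A | ∃ (m : ℕ) (i : Fin m → Fin k), y = fun n => psiWord φ i (z n)} ∪
       {y : ℤ → A | ∃ (m : ℕ) (i : Fin m → Fin k), y = fun n => psiWord φ i (shiftZ 1 z n)}) ∧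
    Set.Finite
      ({y : ℤ → A | ∃ (m : ℕ) (i : Fin m → Fin k), y = fun n => psiWord φ i (z n)} ∪
       {y : ℤ → A | ∃ (m : ℕ) (i : Fin m → Fin k), y = fun n => psiWord φ i (shiftZ 1 z n)}) ∧
    (kernelK k z).Finite := by
  have hsub : kernelK k z ⊆
      ({y : ℤ → A | ∃ (m : ℕ) (i : Fin m → Fin k), y = fun n => psiWord φ i (z n)} ∪
       {y : ℤ → A | ∃ (m : ℕ) (i : Fin m → Fin k), y = fun n => psiWord φ i (shiftZ 1 z n)}) := by
    rintro y ⟨m, j, hj, rfl⟩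
    obtain ⟨i, e, he, hi⟩ := exists_psiWord_of_le_pow hc hz m j hj.le
    interval_cases e
    · exact Or.inl ⟨m, i, funext fun n => by simpa using hi n⟩
    · exact Or.inr ⟨m, i, funext fun n => by simpa [shiftZ] using hi n⟩
  have hfin :=
    (finite_setOf_psiWord_comp φ k z).union (finite_setOf_psiWord_comp φ k (shiftZ 1 z))
  exact ⟨hsub, hfin, hfin.subset hsub⟩

/-- Let `φ` be a substitution of constant length `k ≥ 2` on a finite alphabet and let
`z ∈ A^ℤ` satisfy `z = T^c(φ(z))` for some `0 ≤ c < k`. Then the `k`-kernel of `z` is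
contained in the finite set `{Ψ(z) : Ψ ∈ F} ∪ {Ψ(T(z)) : Ψ ∈ F}`, where `F` is the union
of all families `F_{φ,m}`; consequently the `k`-kernel of `z` is finite, i.e. `z` is
`k`-automatic. -/
theorem kernel_of_quasiFixed_period_one {A : Type*} [Inhabited A] [Fintype A]
    (φ : A → List A) (k : ℕ) (hk : 2 ≤ k) (hlen : ∀ a, (φ a).length = k)
    (z : ℤ → A) (c : ℕ) (hc : c < k) (hz : z = shiftZ (c : ℤ) (substZ φ k z)) :
    kernelK k z ⊆
      ({y : ℤ → A | ∃ (m : ℕ) (i : Fin m → Fin k), y = fun n => psiWord φ i (z n)} ∪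
       {y : ℤ → A | ∃ (m : ℕ) (i : Fin m → Fin k), y = fun n => psiWord φ i (shiftZ 1 z n)}) ∧
    Set.Finite
      ({y : ℤ → A | ∃ (m : ℕ) (i : Fin m → Fin k), y = fun n => psiWord φ i (z n)} ∪
       {y : ℤ → A | ∃ (m : ℕ) (i : Fin m → Fin k), y = fun n => psiWord φ i (shiftZ 1 z n)}) ∧
    (kernelK k z).Finite :=
  kernel_of_quasiFixed_period_one_general φ k z c hc hz
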